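/- Hilbert-matrix identity (Equation (3.52)). Let n ∈ ℤ and η ∈ ℂ with η ∉ ℤ. For m ∈ ℤ set c_m := ∫₀^{2π} e^{−imt} K(t) dt. Then the family (c_m / (n + m + η))_{m ∈ ℤ} is summable, and ∫₀^{2π} e^{i(n+η)t} K(t) dt = ((e^{2πiη} − 1) / (2πi)) · Σ_{m ∈ ℤ} c_m / (n + m + η). In particular, |∫₀^{2π} e^{i(n+η)t} K(t) dt| = |1 − e^{2πiη}| · (2π)^{−1} · |Σ_{m ∈ ℤ} c_m / (n + m + η)|. -/

import Mathlib

/-!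
Parseval's identity on `(0, 2π]`, in its bilinear form, pairs `K` with `t ↦ e^{i(n+η)t}`.
The Fourier coefficients of that exponential are explicit,
`∫₀^{2π} e^{imt} e^{i(n+η)t} dt = (e^{2πiη} - 1) / (i(n+m+η))`, so Parseval gives
`∫₀^{2π} e^{i(n+η)t} K(t) dt = Σ_m ((e^{2πiη} - 1) / (2πi)) · c_m / (n+m+η)`.
As `η ∉ ℤ`, the prefactor is nonzero and can be pulled out of the series.
-/

open MeasureTheory Real Complex Set ComplexConjugate

theorem ContinuousOn.memLp_restrict_of_isCompact {X E : Type*} [TopologicalSpace X] [T2Space X]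
    [MeasurableSpace X] [OpensMeasurableSpace X] [NormedAddCommGroup E]
    [SecondCountableTopologyEither X E] {μ : Measure X} [IsFiniteMeasureOnCompacts μ]
    {s : Set X} {f : X → E} {p : ENNReal} (hs : IsCompact s) (hf : ContinuousOn f s) :
    MemLp f p (μ.restrict s) := by
  have : IsFiniteMeasure (μ.restrict s) := isFiniteMeasure_restrict.mpr hs.measure_lt_top.ne
  obtain ⟨C, hC⟩ := hs.exists_bound_of_continuousOn hf
  exact MemLp.of_bound (hf.aestronglyMeasurable hs.measurableSet) C
    (ae_restrict_of_forall_mem hs.measurableSet hC)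

section FourierCoeffOn

variable {a b : ℝ} (hab : a < b)

theorem hasSum_conj_fourierCoeffOn_mul {f g : ℝ → ℂ}
    (hf : MemLp f 2 (volume.restrict (Ioc a b))) (hg : MemLp g 2 (volume.restrict (Ioc a b))) :
    HasSum (fun i => conj (fourierCoeffOn hab f i) * fourierCoeffOn hab g i)
      ((b - a)⁻¹ • ∫ x in a..b, conj (f x) * g x) := by
  have := Fact.mk (sub_pos.mpr hab)
  rw [← add_sub_cancel a b] at hf hg
  have hf' := hf.memLp_liftIoc.haarAddCircle
  have hg' := hg.memLp_liftIoc.haarAddCircle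
  have hcoeff {h : ℝ → ℂ}
      (hh : MemLp (AddCircle.liftIoc (b - a) a h) 2 AddCircle.haarAddCircle) (i : ℤ) :
      inner ℂ (fourierBasis i) hh.toLp = fourierCoeffOn hab h i := by
    rw [← fourierBasis.repr_apply_apply, fourierBasis_repr, fourierCoeff_congr_ae hh.coeFn_toLp,
      fourierCoeff_liftIoc_eq]
    simp
  have hinner :
      inner ℂ hf'.toLp hg'.toLp = (b - a)⁻¹ • ∫ x in a..a + (b - a), conj (f x) * g x := by
    rw [← AddCircle.integral_liftIoc_eq_intervalIntegral, L2.inner_def,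
      ← AddCircle.integral_haarAddCircle]
    apply integral_congr_ae
    filter_upwards [hf'.coeFn_toLp, hg'.coeFn_toLp] with x hfx hgx
    rw [RCLike.inner_apply, hfx, hgx, mul_comm]
    rfl
  have H := fourierBasis.hasSum_inner_mul_inner hf'.toLp hg'.toLp
  rw [hinner, add_sub_cancel] at H
  simpa only [← inner_conj_symm hf'.toLp, hcoeff] using H

theorem conj_fourierCoeffOn_conj (f : ℝ → ℂ) (i : ℤ) :
    conj (fourierCoeffOn hab (fun x => conj (f x)) i) = fourierCoeffOn hab f (-i) := by
  rw [fourierCoeffOn_eq_integral, fourierCoeffOn_eq_integral, RCLike.conj_smul,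
    ← intervalIntegral.intervalIntegral_conj]
  simp only [smul_eq_mul, map_mul, conj_conj, fourier_neg]

theorem hasSum_fourierCoeffOn_neg_mul {f g : ℝ → ℂ}
    (hf : MemLp f 2 (volume.restrict (Ioc a b))) (hg : MemLp g 2 (volume.restrict (Ioc a b))) :
    HasSum (fun i => fourierCoeffOn hab f (-i) * fourierCoeffOn hab g i)
      ((b - a)⁻¹ • ∫ x in a..b, f x * g x) := by
  simpa only [conj_fourierCoeffOn_conj, conj_conj] using
    hasSum_conj_fourierCoeffOn_mul hab (f := fun x => conj (f x)) hf.star hg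

end FourierCoeffOn

theorem fourierCoeffOn_two_pi (f : ℝ → ℂ) (m : ℤ) :
    fourierCoeffOn two_pi_pos f m =
      (2 * π : ℂ)⁻¹ * ∫ t in (0 : ℝ)..2 * π, exp (-(I * m * t)) * f t := by
  rw [fourierCoeffOn_eq_integral, sub_zero, Complex.real_smul]
  push_cast
  congr 2
  · ring
  funext t
  rw [fourier_coe_apply]
  congr 2
  push_cast
  field_simp

theorem fourierCoeffOn_two_pi_exp_I_mul (k m : ℤ) (η : ℂ) (h : (k : ℂ) + m + η ≠ 0) :
    fourierCoeffOn two_pi_pos (fun t : ℝ => exp (I * (k + η) * t)) (-m) =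
      (exp (2 * π * I * η) - 1) / (2 * π * I * (k + m + η)) := by
  have hmul (t : ℝ) :
      exp (-(I * ↑(-m) * t)) * exp (I * (k + η) * t) = exp (I * (k + m + η) * t) := by
    rw [← Complex.exp_add]; push_cast; ring_nf
  have hperiod : exp (I * (k + m + η) * ↑(2 * π)) = exp (2 * π * I * η) := by
    rw [show I * (k + m + η) * ↑(2 * π) = 2 * π * I * η + ↑(k + m) * (2 * π * I) by
      push_cast; ring, Complex.exp_add, exp_int_mul_two_pi_mul_I, mul_one]
  simp only [fourierCoeffOn_two_pi, hmul]
  rw [integral_exp_mul_complex (mul_ne_zero I_ne_zero h), hperiod, ofReal_zero, mul_zero,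
    Complex.exp_zero]
  field_simp

theorem exp_two_pi_I_mul_ne_one {η : ℂ} (hη : ∀ m : ℤ, η ≠ m) :
    exp (2 * π * I * η) ≠ 1 := by
  intro h
  obtain ⟨k, hk⟩ := exp_eq_one_iff.mp h
  exact hη k (mul_right_cancel₀ two_pi_I_ne_zero (by rw [← hk]; ring))

theorem hilbert_matrix_identity
    (K : ℝ → ℂ)
    (hK : MeasureTheory.MemLp K 2 (MeasureTheory.volume.restrict (Set.Ioo 0 (2 * Real.pi))))
    (n : ℤ) (η : ℂ) (hη : ∀ m : ℤ, η ≠ (m : ℂ))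
    (c : ℤ → ℂ)
    (hc : ∀ m : ℤ, c m = ∫ t in (0:ℝ)..(2 * Real.pi), Complex.exp (-(Complex.I * m * t)) * K t) :
    Summable (fun m : ℤ => c m / ((n : ℂ) + m + η)) ∧
    (∫ t in (0:ℝ)..(2 * Real.pi), Complex.exp (Complex.I * ((n : ℂ) + η) * t) * K t)
      = ((Complex.exp (2 * Real.pi * Complex.I * η) - 1) / (2 * Real.pi * Complex.I)) *
          ∑' m : ℤ, c m / ((n : ℂ) + m + η) ∧
    ‖∫ t in (0:ℝ)..(2 * Real.pi), Complex.exp (Complex.I * ((n : ℂ) + η) * t) * K t‖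
      = ‖1 - Complex.exp (2 * Real.pi * Complex.I * η)‖ * (2 * Real.pi)⁻¹ *
          ‖∑' m : ℤ, c m / ((n : ℂ) + m + η)‖ := by
  set B := (exp (2 * π * I * η) - 1) / (2 * π * I) with hB_def
  have hB : B ≠ 0 := div_ne_zero (sub_ne_zero.mpr (exp_two_pi_I_mul_ne_one hη)) two_pi_I_ne_zero
  have hden (m : ℤ) : (n : ℂ) + m + η ≠ 0 := fun h =>
    hη (-(n + m)) (by push_cast; linear_combination h)
  have hK' : MemLp K 2 (volume.restrict (Ioc 0 (2 * π))) := by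
    rwa [← Measure.restrict_congr_set Ioo_ae_eq_Ioc]
  have hexp : MemLp (fun t : ℝ => exp (I * (n + η) * t)) 2 (volume.restrict (Ioc 0 (2 * π))) :=
    (ContinuousOn.memLp_restrict_of_isCompact isCompact_Icc
      (by fun_prop : Continuous _).continuousOn).mono_measure
        (Measure.restrict_mono Ioc_subset_Icc_self le_rfl)
  have hterm (m : ℤ) : fourierCoeffOn two_pi_pos (fun t : ℝ => exp (I * (n + η) * t)) (-m) *
      fourierCoeffOn two_pi_pos K m = (2 * π : ℂ)⁻¹ * (B * (c m / (n + m + η))) := by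
    rw [fourierCoeffOn_two_pi_exp_I_mul n m η (hden m), fourierCoeffOn_two_pi, ← hc, hB_def]
    field_simp
  have hsum : HasSum (fun m : ℤ => B * (c m / (n + m + η)))
      (∫ t in (0 : ℝ)..2 * π, exp (I * (n + η) * t) * K t) := by
    have H := hasSum_fourierCoeffOn_neg_mul two_pi_pos hexp hK'
    simp only [hterm, sub_zero, Complex.real_smul] at H
    push_cast at H
    exact (hasSum_mul_left_iff (inv_ne_zero (by simp [pi_ne_zero]))).mp H
  have hintegral := hsum.tsum_eq.symm.trans tsum_mul_left
  refine ⟨(summable_mul_left_iff hB).mp hsum.summable, hintegral, ?_⟩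
  rw [hintegral, norm_mul, norm_div, norm_sub_rev]
  simp [abs_of_pos pi_pos, div_eq_mul_inv]
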